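/- arXiv:0808.0345 — 2 statements merged into one kernel-verified Lean document; each statement's English description precedes it below -/
import Mathlib

section
/- Let R be a commutative ring with elements q, r ∈ R, let M be an R-module, and let U, D : M → M be R-linear maps satisfying D ∘ U = q • (U ∘ D) + r • id. If x ∈ M satisfies D x = 0, then for all integers 0 ≤ m ≤ n, D^{n-m} (U^n x) = (r^{n-m} · ∏_{k=m+1}^{n} [k]_q) • (U^m x), where [k]_q = 1 + q + ⋯ + q^{k-1}. -/
/-- The `q`-integer `[k]_q = 1 + q + ⋯ + q^{k-1}`. -/
def qInt {R : Type*} [CommRing R] (q : R) (k : ℕ) : R :=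
  ∑ j ∈ Finset.range k, q ^ j

/-!
Commuting `D` past `U` one factor at a time gives, in any `R`-algebra, the `q`-Weyl identity
`D Uⁿ⁺¹ = qⁿ⁺¹ Uⁿ⁺¹ D + r [n+1]_q Uⁿ`. On a vector killed by `D` the first term vanishes, so each
application of `D` lowers `U^{m+k+1} x` to `r [m+k+1]_q U^{m+k} x`, and iterating collects the product.
-/

theorem qInt_succ {R : Type*} [CommRing R] (q : R) (n : ℕ) :
    qInt q (n + 1) = qInt q n + q ^ n :=
  Finset.sum_range_succ _ n

section Algebra

variable {R A : Type*} [CommRing R] [Ring A] [Algebra R A] {q r : R} {U D : A}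

theorem mul_pow_succ_of_mul_eq (h : D * U = q • (U * D) + r • 1) (n : ℕ) :
    D * U ^ (n + 1) = q ^ (n + 1) • (U ^ (n + 1) * D) + (r * qInt q (n + 1)) • U ^ n := by
  induction n with
  | zero => simpa [qInt] using h
  | succ n ih =>
    calc D * U ^ (n + 2) = (D * U ^ (n + 1)) * U := by rw [pow_succ _ (n + 1), mul_assoc]
      _ = q ^ (n + 1) • (U ^ (n + 1) * (D * U)) + (r * qInt q (n + 1)) • U ^ (n + 1) := by
        rw [ih, add_mul, smul_mul_assoc, smul_mul_assoc, mul_assoc, ← pow_succ]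
      _ = q ^ (n + 2) • (U ^ (n + 2) * D) + (r * qInt q (n + 2)) • U ^ (n + 1) := by
        rw [h, qInt_succ q (n + 1), mul_add, mul_smul_comm, mul_smul_comm, mul_one, ← mul_assoc,
          ← pow_succ, smul_add, smul_smul, smul_smul, add_assoc, ← add_smul, pow_succ q (n + 1)]
        congr 2
        ring

end Algebra

section LinearMap

variable {R M : Type*} [CommRing R] [AddCommGroup M] [Module R M] {q r : R} {U D : Module.End R M}
  {x : M}

theorem apply_pow_succ_of_mul_eq (h : D * U = q • (U * D) + r • 1) (hx : D x = 0) (n : ℕ) :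
    D ((U ^ (n + 1)) x) = (r * qInt q (n + 1)) • (U ^ n) x := by
  rw [← Module.End.mul_apply, mul_pow_succ_of_mul_eq h n]
  simp [Module.End.mul_apply, hx]

theorem pow_apply_pow_add_of_mul_eq (h : D * U = q • (U * D) + r • 1) (hx : D x = 0)
    (m k : ℕ) :
    (D ^ k) ((U ^ (m + k)) x)
      = (r ^ k * ∏ i ∈ Finset.Icc (m + 1) (m + k), qInt q i) • (U ^ m) x := by
  induction k with
  | zero => simp
  | succ k ih =>
    rw [pow_succ, Module.End.mul_apply, ← add_assoc, apply_pow_succ_of_mul_eq h hx, map_smul, ih,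
      smul_smul, Finset.prod_Icc_succ_top (by omega)]
    congr 1
    ring

end LinearMap

/-- Let `R` be a commutative ring with `q, r ∈ R`, `M` an `R`-module and
`U, D : M → M` `R`-linear maps with `D ∘ U = q • (U ∘ D) + r • id`.  If `D x = 0` then
for all `0 ≤ m ≤ n`,
`D^{n-m} (Uⁿ x) = (r^{n-m} · ∏_{k=m+1}^{n} [k]_q) • (Uᵐ x)`. -/
theorem stmt_3 {R : Type*} [CommRing R] {M : Type*} [AddCommGroup M] [Module R M]
    (q r : R) (U D : M →ₗ[R] M)
    (h : D ∘ₗ U = q • (U ∘ₗ D) + r • (LinearMap.id : M →ₗ[R] M))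
    (x : M) (hx : D x = 0) :
    ∀ m n : ℕ, m ≤ n →
      (D ^ (n - m)) ((U ^ n) x)
        = (r ^ (n - m) * ∏ k ∈ Finset.Icc (m + 1) n, qInt q k) • ((U ^ m) x) := by
  rw [← Module.End.mul_eq_comp, ← Module.End.mul_eq_comp, ← Module.End.one_eq_id] at h
  intro m n hmn
  obtain ⟨k, rfl⟩ := Nat.exists_eq_add_of_le hmn
  rw [Nat.add_sub_cancel_left]
  exact pow_apply_pow_add_of_mul_eq h hx m k
end

section
/- Let (Γ, Γ') be a quantized dual graded graph with differential coefficient r over a commutative ring R with distinguished element q, with a unique minimum ∅ (the only vertex of height 0), and with finitely many vertices of each height. Then for every n ≥ 0, ∑_{v : h(v) = n} f_Γ^v · f_{Γ'}^v = r^n · [n]_q!, where [n]_q! = [n]_q [n-1]_q ⋯ [1]_q and [k]_q = 1 + q + ⋯ + q^{k-1}. -/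
open scoped Classical

/-- The `q`-factorial `[n]_q! = [n]_q [n-1]_q ⋯ [1]_q` (with `[0]_q! = 1`). -/
def qFact {R : Type*} [CommRing R] (q : R) (n : ℕ) : R :=
  ∏ k ∈ Finset.range n, qInt q (k + 1)

/-- The path generating function: the (finite) sum, over all sequences
`src = v₀, v₁, …, v_n = v`, of the products `∏_{i=0}^{n-1} m(vᵢ, vᵢ₊₁)` of edge weights. -/
noncomputable def pathGF {R V : Type*} [CommRing R] (m : V → V → R) (src : V) (n : ℕ)
    (v : V) : R :=
  ∑ᶠ p : {p : Fin (n + 1) → V // p 0 = src ∧ p (Fin.last n) = v},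
    ∏ i : Fin n, m (p.1 i.castSucc) (p.1 i.succ)

/-!
Write `U`, `D` for the up and down operators of the pair, acting on functions `V → R`. Then
`f_Γ^v = (Uⁿ δ_∅)(v)` and `f_{Γ'}^v = (U'ⁿ δ_∅)(v)`, where `U'` is the transpose of `D`, so the sum
is the pairing `⟨Uⁿ δ_∅, U'ⁿ δ_∅⟩`. Moving one `U'` across the pairing turns it into `D`, and the
relation `DU = qUD + r`, which holds trivially between vertices of different heights, gives
`D Uᵏ⁺¹ δ_∅ = r [k+1]_q Uᵏ δ_∅` by induction on `k`, starting from `D δ_∅ = 0`. Hence the pairing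
at `n + 1` is `r [n+1]_q` times the pairing at `n`.
-/

open Function

section Finsum

variable {α β M R : Type*}

theorem finsum_comm_of_support_subset [AddCommMonoid M] {f : α → β → M} (s : Finset α)
    (t : Finset β) (hf : ∀ a b, f a b ≠ 0 → a ∈ s ∧ b ∈ t) :
    ∑ᶠ a, ∑ᶠ b, f a b = ∑ᶠ b, ∑ᶠ a, f a b := by
  have inner_a : ∀ a, ∑ᶠ b, f a b = ∑ b ∈ t, f a b := fun a =>
    finsum_eq_sum_of_support_subset _ fun b hb => (hf a b hb).2
  have inner_b : ∀ b, ∑ᶠ a, f a b = ∑ a ∈ s, f a b := fun b =>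
    finsum_eq_sum_of_support_subset _ fun a ha => (hf a b ha).1
  simp only [inner_a, inner_b]
  rw [finsum_eq_sum_of_support_subset _ (s := s), finsum_eq_sum_of_support_subset _ (s := t),
    Finset.sum_comm]
  · intro b hb
    obtain ⟨a, -, ha⟩ := Finset.exists_ne_zero_of_sum_ne_zero hb
    exact (hf a b ha).2
  · intro a ha
    obtain ⟨b, -, hb⟩ := Finset.exists_ne_zero_of_sum_ne_zero ha
    exact (hf a b hb).1

theorem finsum_mul_finsum_assoc [NonUnitalSemiring R] {g : β → R} {K : β → α → R} {L : α → R}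
    (hg : (support g).Finite) (hL : (support L).Finite) :
    ∑ᶠ a, (∑ᶠ b, g b * K b a) * L a = ∑ᶠ b, g b * ∑ᶠ a, K b a * L a := by
  calc ∑ᶠ a, (∑ᶠ b, g b * K b a) * L a = ∑ᶠ a, ∑ᶠ b, g b * K b a * L a :=
        finsum_congr fun a => finsum_mul' _ _ (hg.subset fun b hb => left_ne_zero_of_mul hb)
    _ = ∑ᶠ b, ∑ᶠ a, g b * K b a * L a :=
        (finsum_comm_of_support_subset hL.toFinset hg.toFinset fun a b h => by
          simp only [Set.Finite.mem_toFinset, mem_support]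
          exact ⟨right_ne_zero_of_mul h, left_ne_zero_of_mul (left_ne_zero_of_mul h)⟩)
    _ = ∑ᶠ b, g b * ∑ᶠ a, K b a * L a := by
        refine finsum_congr fun b => ?_
        rw [mul_finsum' _ _ ?_]
        · simp only [mul_assoc]
        · exact hL.subset fun a ha => right_ne_zero_of_mul ha

theorem finsum_sigma [AddCommMonoid M] {κ : α → Type*} {F : (Σ a, κ a) → M}
    (hF : (support F).Finite) : ∑ᶠ x, F x = ∑ᶠ a, ∑ᶠ k, F ⟨a, k⟩ := by
  set s := hF.toFinset
  have hfiber : ∀ a, ∑ᶠ k, F ⟨a, k⟩ = ∑ k ∈ s.preimage (Sigma.mk a) sigma_mk_injective.injOn,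
      F ⟨a, k⟩ := fun a =>
    finsum_eq_sum_of_support_subset _ fun k hk => by simpa [s, Set.Finite.mem_toFinset] using hk
  simp only [hfiber]
  rw [finsum_eq_sum_of_support_subset _ (s := s.image Sigma.fst),
    finsum_eq_sum_of_support_subset _ (s := s), ← Finset.sum_sigma]
  · congr 1
    ext ⟨a, k⟩
    simpa using fun hk => ⟨k, hk⟩
  · intro x hx
    simpa [s, Set.Finite.mem_toFinset] using hx
  · intro a ha
    obtain ⟨k, hk, -⟩ := Finset.exists_ne_zero_of_sum_ne_zero ha
    simp only [Finset.mem_preimage] at hk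
    exact Finset.mem_coe.2 (Finset.mem_image_of_mem Sigma.fst hk)

end Finsum

section QAnalogues

variable {R : Type*} [CommRing R]

theorem qInt_succ_s4 (q : R) (k : ℕ) : qInt q (k + 1) = q * qInt q k + 1 := by
  rw [qInt, qInt, Finset.sum_range_succ', Finset.mul_sum]
  simp only [pow_succ', pow_zero]

theorem qFact_succ (q : R) (n : ℕ) : qFact q (n + 1) = qFact q n * qInt q (n + 1) :=
  Finset.prod_range_succ _ _

end QAnalogues

namespace DualGradedGraph

variable {R V : Type*} [CommRing R]

def IsGraded (h : V → ℕ) (m : V → V → R) : Prop := ∀ v w, m v w ≠ 0 → h w = h v + 1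

/-- `DU = qUD + r`, compared on the coefficient of `v` in the image of `u`. -/
def IsQDual (q r : R) (m m' : V → V → R) : Prop :=
  ∀ u v, ∑ᶠ w, m u w * m' v w = q * ∑ᶠ x, m' x u * m x v + r * if u = v then 1 else 0

@[simps! apply_coe]
def pathSnocEquiv (e v : V) (n : ℕ) :
    (Σ w : V, {p : Fin (n + 1) → V // p 0 = e ∧ p (Fin.last n) = w}) ≃
      {p : Fin (n + 2) → V // p 0 = e ∧ p (Fin.last (n + 1)) = v} where
  toFun x := ⟨Fin.snoc x.2.1 v, (Fin.snoc_castSucc (i := 0) ..).trans x.2.2.1,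
    Fin.snoc_last _ _⟩
  invFun p := ⟨p.1 (Fin.last n).castSucc, Fin.init p.1, p.2.1, rfl⟩
  left_inv x := Sigma.subtype_ext (by simp [x.2.2.2]) (by simp)
  right_inv p := Subtype.ext (by simp [← p.2.2])

theorem prod_snoc_weight (m : V → V → R) {n : ℕ} (p : Fin (n + 1) → V) (v : V) :
    ∏ i : Fin (n + 1), m ((Fin.snoc p v : Fin (n + 2) → V) i.castSucc)
        ((Fin.snoc p v : Fin (n + 2) → V) i.succ)
      = (∏ i : Fin n, m (p i.castSucc) (p i.succ)) * m (p (Fin.last n)) v := by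
  rw [Fin.prod_univ_castSucc]
  simp only [Fin.snoc_castSucc, ← Fin.castSucc_succ, Fin.succ_last, Fin.snoc_last]

variable {h : V → ℕ} {m m' : V → V → R} {q r : R}

theorem height_path_of_prod_ne_zero (hm : IsGraded h m) {n : ℕ} {p : Fin (n + 1) → V}
    (hp : ∏ i : Fin n, m (p i.castSucc) (p i.succ) ≠ 0) (i : Fin (n + 1)) :
    h (p i) = h (p 0) + i := by
  induction i using Fin.induction with
  | zero => rfl
  | succ i ih =>
    have hstep : m (p i.castSucc) (p i.succ) ≠ 0 := fun h0 =>
      hp (Finset.prod_eq_zero (Finset.mem_univ i) h0)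
    rw [hm _ _ hstep, ih, Fin.val_succ, Fin.val_castSucc, add_assoc]

theorem finite_support_path_weight (hm : IsGraded h m) (hfin : ∀ k, {v : V | h v = k}.Finite)
    (e : V) (n : ℕ) (v : V) :
    (support fun p : {p : Fin (n + 1) → V // p 0 = e ∧ p (Fin.last n) = v} =>
      ∏ i : Fin n, m (p.1 i.castSucc) (p.1 i.succ)).Finite := by
  refine ((Set.Finite.pi fun i : Fin (n + 1) => hfin (h e + i)).preimage
    Subtype.val_injective.injOn).subset fun p hp i _ => ?_
  simpa [p.2.1] using height_path_of_prod_ne_zero hm hp i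

theorem pathGF_zero (e : V) : pathGF m e 0 = Pi.single e 1 := by
  funext v
  by_cases hv : v = e
  · subst hv
    have : Unique {p : Fin 1 → V // p 0 = v ∧ p (Fin.last 0) = v} :=
      ⟨⟨⟨fun _ => v, rfl, rfl⟩⟩, fun p => Subtype.ext (funext fun i => by
        rw [Subsingleton.elim i 0, p.2.1]; rfl)⟩
    rw [pathGF, finsum_unique]
    simp
  · have : IsEmpty {p : Fin 1 → V // p 0 = e ∧ p (Fin.last 0) = v} :=
      ⟨fun p => hv (p.2.2.symm.trans p.2.1)⟩
    rw [pathGF, finsum_of_isEmpty]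
    simp [hv]

theorem pathGF_succ (hm : IsGraded h m) (hfin : ∀ k, {v : V | h v = k}.Finite) (e : V)
    (n : ℕ) (v : V) :
    pathGF m e (n + 1) v = ∑ᶠ w, pathGF m e n w * m w v := by
  calc pathGF m e (n + 1) v
      = ∑ᶠ x, ∏ i : Fin (n + 1),
          m ((pathSnocEquiv e v n x).1 i.castSucc) ((pathSnocEquiv e v n x).1 i.succ) :=
        (finsum_comp_equiv (pathSnocEquiv e v n)).symm
    _ = ∑ᶠ w, ∑ᶠ p, ∏ i : Fin (n + 1),
          m ((pathSnocEquiv e v n ⟨w, p⟩).1 i.castSucc) ((pathSnocEquiv e v n ⟨w, p⟩).1 i.succ) :=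
        finsum_sigma ((finite_support_path_weight hm hfin e (n + 1) v).preimage
          (pathSnocEquiv e v n).injective.injOn)
    _ = ∑ᶠ w, pathGF m e n w * m w v := by
        refine finsum_congr fun w => ?_
        rw [pathGF, finsum_mul' _ _ (finite_support_path_weight hm hfin e n w)]
        refine finsum_congr fun p => ?_
        simp only [pathSnocEquiv_apply_coe]
        rw [prod_snoc_weight, p.2.2]

/-- `up m` and `down m'` are the operators `U` and `D` of the pair `(Γ, Γ')`, acting on
coefficient functions of formal linear combinations of vertices. -/
noncomputable def up (m : V → V → R) (g : V → R) (w : V) : R := ∑ᶠ u, g u * m u w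

noncomputable def down (m : V → V → R) (g : V → R) (v : V) : R := ∑ᶠ w, m v w * g w

theorem pathGF_eq_iterate_up (hm : IsGraded h m) (hfin : ∀ k, {v : V | h v = k}.Finite)
    (e : V) (n : ℕ) :
    pathGF m e n = (up m)^[n] (Pi.single e 1) := by
  induction n with
  | zero => exact pathGF_zero e
  | succ n ih =>
    funext v
    rw [pathGF_succ hm hfin, Function.iterate_succ_apply', ← ih]
    rfl

theorem support_up_subset (hm : IsGraded h m) {g : V → R} {k : ℕ}
    (hg : support g ⊆ {v | h v = k}) : support (up m g) ⊆ {v | h v = k + 1} := by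
  intro w hw
  obtain ⟨u, hu⟩ : ∃ u, g u * m u w ≠ 0 := by
    by_contra! h0
    exact hw (finsum_eq_zero_of_forall_eq_zero h0)
  show h w = k + 1
  rw [hm u w (right_ne_zero_of_mul hu), hg (left_ne_zero_of_mul hu)]

theorem support_iterate_up_single_subset (hm : IsGraded h m) (e : V) (n : ℕ) :
    support ((up m)^[n] (Pi.single e (1 : R))) ⊆ {v | h v = h e + n} := by
  induction n with
  | zero =>
    intro v hv
    rw [Set.eq_of_mem_singleton (Pi.support_single_subset hv)]
    simp
  | succ n ih =>
    rw [Function.iterate_succ_apply']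
    exact support_up_subset hm ih

theorem down_single_of_height_eq_zero (hm' : IsGraded h m') {e : V} (he0 : h e = 0) :
    down m' (Pi.single e (1 : R)) = 0 := by
  funext v
  rw [down, finsum_eq_single _ e fun w hw => by simp [hw], Pi.single_eq_same, mul_one]
  by_contra hv
  have := hm' v e hv
  omega

theorem isQDual_of_graded (hm : IsGraded h m) (hm' : IsGraded h m')
    (hdual : ∀ u v : V, h u = h v →
      (∑ᶠ w : V, m u w * m' v w) = q * (∑ᶠ x : V, m' x u * m x v) + r * (if u = v then 1 else 0)) :
    IsQDual q r m m' := by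
  intro u v
  by_cases huv : h u = h v
  · exact hdual u v huv
  have hDU : ∀ w, m u w * m' v w = 0 := fun w => by
    by_contra hw
    have := hm u w (left_ne_zero_of_mul hw)
    have := hm' v w (right_ne_zero_of_mul hw)
    omega
  have hUD : ∀ x, m' x u * m x v = 0 := fun x => by
    by_contra hx
    have := hm' x u (left_ne_zero_of_mul hx)
    have := hm x v (right_ne_zero_of_mul hx)
    omega
  rw [finsum_eq_zero_of_forall_eq_zero hDU, finsum_eq_zero_of_forall_eq_zero hUD,
    if_neg fun huv' => huv (congrArg h huv')]
  ring

theorem finite_support_row (hm : IsGraded h m) (hfin : ∀ k, {v : V | h v = k}.Finite) (v : V) :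
    (support (m v)).Finite :=
  (hfin (h v + 1)).subset fun w hw => hm v w hw

theorem finite_support_col (hm : IsGraded h m) (hfin : ∀ k, {v : V | h v = k}.Finite) (w : V) :
    (support (m · w)).Finite :=
  (hfin (h w - 1)).subset fun v hv => by
    have := hm v w hv
    show h v = h w - 1
    omega

theorem down_up_apply (hm : IsGraded h m) (hm' : IsGraded h m')
    (hfin : ∀ k, {v : V | h v = k}.Finite) (hqd : IsQDual q r m m')
    {g : V → R} (hg : (support g).Finite) (v : V) :
    down m' (up m g) v = q * up m (down m' g) v + r * g v := by
  have hgmul : ∀ c : V → R, (support fun u => g u * c u).Finite := fun c =>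
    hg.subset fun u hu => left_ne_zero_of_mul hu
  have hDU : down m' (up m g) v = ∑ᶠ u, g u * ∑ᶠ w, m u w * m' v w := by
    simp only [down, up, mul_comm (m' v _)]
    exact finsum_mul_finsum_assoc hg (finite_support_row hm' hfin v)
  have hUD : up m (down m' g) v = ∑ᶠ u, g u * ∑ᶠ x, m' x u * m x v := by
    simp only [down, up, mul_comm (m' _ _) (g _)]
    exact finsum_mul_finsum_assoc hg (finite_support_col hm hfin v)
  rw [hDU, hUD, mul_finsum' _ _ (hgmul _)]
  calc ∑ᶠ u, g u * ∑ᶠ w, m u w * m' v w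
      = ∑ᶠ u, (q * (g u * ∑ᶠ x, m' x u * m x v) + r * (g u * if u = v then 1 else 0)) :=
        finsum_congr fun u => by rw [hqd u v]; ring
    _ = (∑ᶠ u, q * (g u * ∑ᶠ x, m' x u * m x v)) + r * ∑ᶠ u, g u * if u = v then 1 else 0 := by
        rw [finsum_add_distrib, mul_finsum' _ _ (hgmul _)]
        · exact (hgmul _).subset fun u hu => right_ne_zero_of_mul hu
        · exact (hgmul _).subset fun u hu => right_ne_zero_of_mul hu
    _ = (∑ᶠ u, q * (g u * ∑ᶠ x, m' x u * m x v)) + r * g v := by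
        rw [finsum_eq_single (fun u => g u * if u = v then 1 else 0) v
          fun u hu => by rw [if_neg hu, mul_zero], if_pos rfl, mul_one]

theorem up_smul {g : V → R} (hg : (support g).Finite) (c : R) : up m (c • g) = c • up m g := by
  funext w
  simp only [up, Pi.smul_apply, smul_eq_mul, mul_assoc]
  exact (mul_finsum' _ _ (hg.subset fun u hu => left_ne_zero_of_mul hu)).symm

theorem finsum_mul_up_eq_finsum_down_mul {g g' : V → R} (hg : (support g).Finite)
    (hg' : (support g').Finite) : ∑ᶠ v, g v * up m g' v = ∑ᶠ w, down m g w * g' w :=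
  calc ∑ᶠ v, g v * up m g' v = ∑ᶠ v, (∑ᶠ w, g' w * m w v) * g v :=
        finsum_congr fun _ => mul_comm _ _
    _ = ∑ᶠ w, g' w * ∑ᶠ v, m w v * g v := finsum_mul_finsum_assoc hg' hg
    _ = ∑ᶠ w, down m g w * g' w := finsum_congr fun _ => mul_comm _ _

theorem finite_support_iterate_up_single (hm : IsGraded h m)
    (hfin : ∀ k, {v : V | h v = k}.Finite) (e : V) (n : ℕ) :
    (support ((up m)^[n] (Pi.single e (1 : R)))).Finite :=
  (hfin _).subset (support_iterate_up_single_subset hm e n)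

theorem down_iterate_up_succ (hm : IsGraded h m) (hm' : IsGraded h m')
    (hfin : ∀ k, {v : V | h v = k}.Finite) (hqd : IsQDual q r m m')
    {e : V} (he0 : h e = 0) (k : ℕ) :
    down m' ((up m)^[k + 1] (Pi.single e 1))
      = (r * qInt q (k + 1)) • (up m)^[k] (Pi.single e 1) := by
  induction k with
  | zero =>
    funext v
    rw [Function.iterate_one, down_up_apply hm hm' hfin hqd (g := Pi.single e 1)
      (finite_support_iterate_up_single hm hfin e 0), down_single_of_height_eq_zero hm' he0]
    simp [up, qInt]
  | succ k ih =>
    funext v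
    rw [Function.iterate_succ_apply',
      down_up_apply hm hm' hfin hqd (finite_support_iterate_up_single hm hfin e _), ih,
      up_smul (finite_support_iterate_up_single hm hfin e _), ← Function.iterate_succ_apply' (up m),
      qInt_succ_s4 q (k + 1)]
    simp only [Pi.smul_apply, smul_eq_mul]
    ring

theorem finsum_iterate_up_mul_iterate_up (hm : IsGraded h m) (hm' : IsGraded h m')
    (hfin : ∀ k, {v : V | h v = k}.Finite) (hqd : IsQDual q r m m')
    {e : V} (he0 : h e = 0) (n : ℕ) :
    ∑ᶠ v, (up m)^[n] (Pi.single e 1) v * (up m')^[n] (Pi.single e 1) v = r ^ n * qFact q n := by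
  induction n with
  | zero =>
    rw [finsum_eq_single _ e fun v hv => by simp [hv]]
    simp [qFact]
  | succ n ih =>
    rw [Function.iterate_succ_apply' (up m'),
      finsum_mul_up_eq_finsum_down_mul (finite_support_iterate_up_single hm hfin e _)
        (finite_support_iterate_up_single hm' hfin e _),
      down_iterate_up_succ hm hm' hfin hqd he0]
    simp only [Pi.smul_apply, smul_eq_mul, mul_assoc (r * qInt q (n + 1))]
    rw [← mul_finsum' _ _ ((finite_support_iterate_up_single hm hfin e n).subset
      fun v hv => left_ne_zero_of_mul hv), ih, qFact_succ, pow_succ]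
    ring

end DualGradedGraph

theorem stmt_4_general {R V : Type*} [CommRing R] (q r : R) (h : V → ℕ) (m m' : V → V → R)
    -- weights are supported on edges raising height by one
    (hm : ∀ v w, m v w ≠ 0 → h w = h v + 1)
    (hm' : ∀ v w, m' v w ≠ 0 → h w = h v + 1)
    -- finitely many vertices of each height
    (hfin : ∀ n : ℕ, {v : V | h v = n}.Finite)
    -- the quantized dual graded graph relation `DU - qUD = rI`
    (hdual : ∀ u v : V, h u = h v →
      (∑ᶠ w : V, m u w * m' v w)
        = q * (∑ᶠ x : V, m' x u * m x v) + r * (if u = v then 1 else 0))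
    -- `∅` is the unique minimum: the only vertex of height `0`
    (e : V) (he : ∀ v : V, h v = 0 ↔ v = e)
    (n : ℕ) :
    (∑ᶠ v ∈ {v : V | h v = n}, pathGF m e n v * pathGF m' e n v)
      = r ^ n * qFact q n := by
  have he0 : h e = 0 := (he e).2 rfl
  rw [DualGradedGraph.pathGF_eq_iterate_up hm hfin, DualGradedGraph.pathGF_eq_iterate_up hm' hfin,
    ← DualGradedGraph.finsum_iterate_up_mul_iterate_up hm hm' hfin
      (DualGradedGraph.isQDual_of_graded hm hm' hdual) he0 n]
  refine (finsum_mem_inter_support_eq' _ _ Set.univ fun v hv => ?_).trans (finsum_mem_univ _)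
  have hv : h v = h e + n :=
    DualGradedGraph.support_iterate_up_single_subset hm e n (left_ne_zero_of_mul hv)
  simp [hv, he0]

/-- Let `(Γ, Γ')` be a quantized dual graded graph with differential
coefficient `r` over a commutative ring `R` with distinguished element `q`, with a unique
minimum `∅` (the only vertex of height `0`) and finitely many vertices of each height.
Then for all `n ≥ 0`, `∑_{v : h(v) = n} f_Γ^v · f_{Γ'}^v = rⁿ · [n]_q!`. -/
theorem stmt_4 {R V : Type*} [CommRing R] (q r : R) (h : V → ℕ) (m m' : V → V → R)
    -- weights are supported on edges raising height by one
    (hm : ∀ v w, m v w ≠ 0 → h w = h v + 1)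
    (hm' : ∀ v w, m' v w ≠ 0 → h w = h v + 1)
    -- local finiteness of the two graphs
    (hloc : ∀ v : V, {w | m v w ≠ 0 ∨ m w v ≠ 0 ∨ m' v w ≠ 0 ∨ m' w v ≠ 0}.Finite)
    -- finitely many vertices of each height
    (hfin : ∀ n : ℕ, {v : V | h v = n}.Finite)
    -- the quantized dual graded graph relation `DU - qUD = rI`
    (hdual : ∀ u v : V, h u = h v →
      (∑ᶠ w : V, m u w * m' v w)
        = q * (∑ᶠ x : V, m' x u * m x v) + r * (if u = v then 1 else 0))
    -- `∅` is the unique minimum: the only vertex of height `0`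
    (e : V) (he : ∀ v : V, h v = 0 ↔ v = e)
    (n : ℕ) :
    (∑ᶠ v ∈ {v : V | h v = n}, pathGF m e n v * pathGF m' e n v)
      = r ^ n * qFact q n :=
  stmt_4_general q r h m m' hm hm' hfin hdual e he n
end
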